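/- Let H be a complex Hilbert space and let S, T be normal bounded linear operators on H with Cartesian decompositions S = A + iC and T = B + iD such that A and B are positive. Then ‖ST − TS‖ ≤ (1/2)·√(‖A‖² + 4‖C‖²)·√(‖B‖² + 4‖D‖²). -/

import Mathlib

/-!
Subtracting real scalars from `S` and `T` does not change `ST - TS`. Since the spectrum of the
positive part `A` lies in `[0, ‖A‖]`, the shift `S' = S - ‖A‖/2` has real part of norm at most
`‖A‖/2`, and it is still normal, so `‖S'‖² = ‖(ℜ S')² + C²‖ ≤ ‖A‖²/4 + ‖C‖²`. The bound then
follows from `‖S'T' - T'S'‖ ≤ 2‖S'‖‖T'‖`.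
-/

open scoped ComplexStarModule

lemma commutator_sub_algebraMap {R A : Type*} [CommRing R] [Ring A] [Algebra R A]
    (a b : A) (r s : R) :
    (a - algebraMap R A r) * (b - algebraMap R A s) - (b - algebraMap R A s) * (a - algebraMap R A r)
      = a * b - b * a := by
  simp only [sub_mul, mul_sub, ← Algebra.commutes r b, ← Algebra.commutes s a, ← map_mul,
    mul_comm r s]
  abel

lemma norm_commutator_le {A : Type*} [NonUnitalSeminormedRing A] (a b : A) :
    ‖a * b - b * a‖ ≤ 2 * ‖a‖ * ‖b‖ :=
  calc ‖a * b - b * a‖ ≤ ‖a‖ * ‖b‖ + ‖b‖ * ‖a‖ :=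
        (norm_sub_le _ _).trans (add_le_add (norm_mul_le _ _) (norm_mul_le _ _))
    _ = 2 * ‖a‖ * ‖b‖ := by ring

section ComplexStarModule

variable {A : Type*} [AddCommGroup A] [Module ℂ A] [StarAddMonoid A] [StarModule ℂ A]
  {x y : A}

lemma realPart_add_I_smul (hx : IsSelfAdjoint x) (hy : IsSelfAdjoint y) :
    (ℜ (x + Complex.I • y) : A) = x := by
  simp [realPart_I_smul, hx.coe_realPart, hy.imaginaryPart]

lemma imaginaryPart_add_I_smul (hx : IsSelfAdjoint x) (hy : IsSelfAdjoint y) :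
    (ℑ (x + Complex.I • y) : A) = y := by
  simp [imaginaryPart_I_smul, hy.coe_realPart, hx.imaginaryPart]

end ComplexStarModule

section CStarAlgebra

variable {A : Type*} [CStarAlgebra A]

lemma IsStarNormal.norm_sq_le_norm_realPart_sq_add (a : A) [IsStarNormal a] :
    ‖a‖ ^ 2 ≤ ‖(ℜ a : A)‖ ^ 2 + ‖(ℑ a : A)‖ ^ 2 :=
  calc ‖a‖ ^ 2 = ‖(ℜ a : A) * ℜ a + ℑ a * ℑ a‖ := by
        rw [sq, ← CStarRing.norm_star_mul_self, star_mul_self_eq_realPart_sq_add_imaginaryPart_sq]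
    _ ≤ ‖(ℜ a : A)‖ ^ 2 + ‖(ℑ a : A)‖ ^ 2 := by
        rw [sq, sq]
        exact (norm_add_le _ _).trans (add_le_add (norm_mul_le _ _) (norm_mul_le _ _))

variable [PartialOrder A] [StarOrderedRing A]

lemma IsSelfAdjoint.norm_le_of_mem_Icc {x : A} (hx : IsSelfAdjoint x) {r : ℝ} (hr : 0 ≤ r)
    (hlow : -algebraMap ℝ A r ≤ x) (hup : x ≤ algebraMap ℝ A r) : ‖x‖ ≤ r := by
  rcases subsingleton_or_nontrivial A with _ | _
  · simp [Subsingleton.elim x 0, hr]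
  have hσup : ∀ μ ∈ spectrum ℝ x, μ ≤ r := (le_algebraMap_iff_spectrum_le hx).mp hup
  have hσlow : ∀ μ ∈ spectrum ℝ x, -r ≤ μ :=
    (algebraMap_le_iff_le_spectrum hx).mp (by rwa [map_neg])
  rcases CStarAlgebra.norm_or_neg_norm_mem_spectrum hx with h | h
  · exact hσup _ h
  · linarith [hσlow _ h]

lemma norm_sub_algebraMap_half_norm_le {a : A} (ha : 0 ≤ a) :
    ‖a - algebraMap ℝ A (‖a‖ / 2)‖ ≤ ‖a‖ / 2 := by
  refine (IsSelfAdjoint.of_nonneg ha |>.sub (.algebraMap A (.all _))).norm_le_of_mem_Icc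
    (by positivity) ?_ ?_
  · simpa using ha
  · rw [sub_le_iff_le_add, ← map_add, add_halves]
    exact (IsSelfAdjoint.of_nonneg ha).le_algebraMap_norm_self

lemma IsStarNormal.two_mul_norm_sub_algebraMap_le {a x y : A} [IsStarNormal a]
    (hx : 0 ≤ x) (hy : IsSelfAdjoint y) (ha : a = x + Complex.I • y) :
    2 * ‖a - algebraMap ℝ A (‖x‖ / 2)‖ ≤ √(‖x‖ ^ 2 + 4 * ‖y‖ ^ 2) := by
  set c := algebraMap ℝ A (‖x‖ / 2)
  have hc : IsSelfAdjoint c := .algebraMap A (.all _)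
  have : IsStarNormal c := hc.isStarNormal
  have : IsStarNormal (a - c) :=
    Commute.isStarNormal_sub (by rw [hc.star_eq]; exact Algebra.commute_algebraMap_right _ a)
  have hdec : a - c = (x - c) + Complex.I • y := by rw [ha]; abel
  have hxc : IsSelfAdjoint (x - c) := (IsSelfAdjoint.of_nonneg hx).sub hc
  have hsq : ‖a - c‖ ^ 2 ≤ ‖x - c‖ ^ 2 + ‖y‖ ^ 2 := by
    have := IsStarNormal.norm_sq_le_norm_realPart_sq_add (a - c)
    rwa [hdec, realPart_add_I_smul hxc hy, imaginaryPart_add_I_smul hxc hy, ← hdec] at this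
  have hshift := norm_sub_algebraMap_half_norm_le hx
  rw [Real.le_sqrt (by positivity) (by positivity)]
  nlinarith [norm_nonneg (x - c)]

end CStarAlgebra

/-- For normal `S = A + iC`, `T = B + iD` with `A, B` positive,
`‖ST − TS‖ ≤ (1/2)√(‖A‖² + 4‖C‖²)·√(‖B‖² + 4‖D‖²)`. -/
theorem commutator_norm_bound_of_positive_real_parts
    {H : Type*} [NormedAddCommGroup H] [InnerProductSpace ℂ H] [CompleteSpace H]
    (S T A B C D : H →L[ℂ] H)
    (hS : IsStarNormal S) (hT : IsStarNormal T)
    (hC : IsSelfAdjoint C) (hD : IsSelfAdjoint D)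
    (hSdec : S = A + Complex.I • C) (hTdec : T = B + Complex.I • D)
    (hA : A.IsPositive) (hB : B.IsPositive) :
    ‖S * T - T * S‖ ≤
      (1 / 2) * Real.sqrt (‖A‖ ^ 2 + 4 * ‖C‖ ^ 2) * Real.sqrt (‖B‖ ^ 2 + 4 * ‖D‖ ^ 2) := by
  set S' := S - algebraMap ℝ (H →L[ℂ] H) (‖A‖ / 2)
  set T' := T - algebraMap ℝ (H →L[ℂ] H) (‖B‖ / 2)
  have hS' : 2 * ‖S'‖ ≤ √(‖A‖ ^ 2 + 4 * ‖C‖ ^ 2) :=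
    hS.two_mul_norm_sub_algebraMap_le ((A.nonneg_iff_isPositive).mpr hA) hC hSdec
  have hT' : 2 * ‖T'‖ ≤ √(‖B‖ ^ 2 + 4 * ‖D‖ ^ 2) :=
    hT.two_mul_norm_sub_algebraMap_le ((B.nonneg_iff_isPositive).mpr hB) hD hTdec
  calc ‖S * T - T * S‖ = ‖S' * T' - T' * S'‖ := by rw [commutator_sub_algebraMap]
    _ ≤ 2 * ‖S'‖ * ‖T'‖ := norm_commutator_le S' T'
    _ = (1 / 2) * (2 * ‖S'‖) * (2 * ‖T'‖) := by ring
    _ ≤ _ := by gcongr
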